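/- (Convergence of the likelihood values along the BaBE iteration.) Let 𝓔 and 𝓩 be nonempty finite types, P a channel with P w e > 0 for all w ∈ 𝓩 and e ∈ 𝓔, and z : Fin M → 𝓩 samples. Define the BaBE iterates by θ⁽⁰⁾ = the uniform distribution on 𝓔 (θ⁽⁰⁾ e = 1/|𝓔|) and θ⁽ᵗ⁺¹⁾ = T(θ⁽ᵗ⁾). Then every θ⁽ᵗ⁾ is a fully supported distribution on 𝓔, the sequence t ↦ L(θ⁽ᵗ⁾) is monotonically nondecreasing and bounded above by 0, and hence it converges to a real limit. -/

import Mathlib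

/-!
BaBE is the EM algorithm for the mixture `∑ e, P w e * θ e`. With posterior weights `W_{θ'}`,
Jensen's inequality for `log` gives `L θ - L θ' ≥ Q(θ, θ') - Q(θ', θ')` for the EM surrogate `Q`,
and `Q(θ, θ') = M * ∑ e, T(θ') e * log (θ e)`, so Gibbs' inequality shows that `θ = T(θ')`
maximizes `Q(·, θ')` over distributions. Hence `L` never decreases along the iteration; it is
bounded by `0` because every `∑ e, P w e * θ e` is a probability.
-/

open Finset Real Filter
open scoped Classical

/-- Posterior weight `W_{θ'}(w, e) = P w e * θ' e / ∑ e', P w e' * θ' e'`. -/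
noncomputable def West {𝓔 𝓩 : Type*} [Fintype 𝓔] (P : 𝓩 → 𝓔 → ℝ) (θ' : 𝓔 → ℝ)
    (w : 𝓩) (e : 𝓔) : ℝ :=
  P w e * θ' e / ∑ e' : 𝓔, P w e' * θ' e'

/-- EM surrogate `Q(θ, θ') = ∑ i, ∑ e, W_{θ'}(z i, e) * log (θ e)`. -/
noncomputable def Qsur {𝓔 𝓩 : Type*} [Fintype 𝓔] (P : 𝓩 → 𝓔 → ℝ) {M : ℕ}
    (z : Fin M → 𝓩) (θ θ' : 𝓔 → ℝ) : ℝ :=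
  ∑ i : Fin M, ∑ e : 𝓔, West P θ' (z i) e * Real.log (θ e)

/-- Empirical frequency `φ(w) = |{i : z i = w}| / M`. -/
noncomputable def emp {𝓩 : Type*} {M : ℕ} (z : Fin M → 𝓩) (w : 𝓩) : ℝ :=
  ((Finset.univ.filter (fun i : Fin M => z i = w)).card : ℝ) / M

/-- BaBE update `T(θ') e = ∑ w, φ(w) * W_{θ'}(w, e)`. -/
noncomputable def babe {𝓔 𝓩 : Type*} [Fintype 𝓔] [Fintype 𝓩] (P : 𝓩 → 𝓔 → ℝ) {M : ℕ}
    (z : Fin M → 𝓩) (θ' : 𝓔 → ℝ) (e : 𝓔) : ℝ :=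
  ∑ w : 𝓩, emp z w * West P θ' w e

/-- Log-likelihood `L(θ) = ∑ i, log (∑ e, P (z i) e * θ e)`. -/
noncomputable def loglik {𝓔 𝓩 : Type*} [Fintype 𝓔] (P : 𝓩 → 𝓔 → ℝ) {M : ℕ}
    (z : Fin M → 𝓩) (θ : 𝓔 → ℝ) : ℝ :=
  ∑ i : Fin M, Real.log (∑ e : 𝓔, P (z i) e * θ e)

lemma sum_mul_log_div_nonneg {ι : Type*} (s : Finset ι) {p q : ι → ℝ}
    (hp : ∀ i ∈ s, 0 ≤ p i) (hq : ∀ i ∈ s, 0 < q i) (hpq : ∑ i ∈ s, q i ≤ ∑ i ∈ s, p i) :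
    0 ≤ ∑ i ∈ s, p i * log (p i / q i) := by
  have hterm : ∀ i ∈ s, p i - q i ≤ p i * log (p i / q i) := by
    intro i hi
    rcases (hp i hi).eq_or_lt with hpi | hpi
    · rw [← hpi]; simpa using (hq i hi).le
    · have := one_sub_inv_le_log_of_pos (div_pos hpi (hq i hi))
      rw [inv_div] at this
      calc p i - q i = p i * (1 - q i / p i) := by field_simp
        _ ≤ p i * log (p i / q i) := mul_le_mul_of_nonneg_left this hpi.le
  calc (0 : ℝ) ≤ ∑ i ∈ s, (p i - q i) := by rw [sum_sub_distrib]; linarith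
    _ ≤ _ := sum_le_sum hterm

section Empirical

variable {𝓩 : Type*} {M : ℕ} (z : Fin M → 𝓩)

lemma emp_nonneg (w : 𝓩) : 0 ≤ emp z w := by
  unfold emp; positivity

lemma sum_comp_eq_mul_sum_emp [Fintype 𝓩] (g : 𝓩 → ℝ) :
    ∑ i, g (z i) = M * ∑ w, emp z w * g w := by
  rcases eq_or_ne M 0 with rfl | hM
  · simp
  rw [← sum_fiberwise' univ z g, mul_sum]
  refine sum_congr rfl fun w _ => ?_
  rw [sum_const, nsmul_eq_mul, emp]
  field_simp

lemma sum_emp [Fintype 𝓩] (hM : M ≠ 0) : ∑ w, emp z w = 1 := by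
  have := sum_comp_eq_mul_sum_emp z (fun _ => 1)
  simp only [sum_const, card_univ, Fintype.card_fin, nsmul_eq_mul, mul_one] at this
  exact (mul_eq_left₀ (Nat.cast_ne_zero.mpr hM)).mp this.symm

lemma emp_comp_pos (hM : M ≠ 0) (i : Fin M) : 0 < emp z (z i) := by
  unfold emp
  have : 0 < (univ.filter fun j : Fin M => z j = z i).card := card_pos.mpr ⟨i, by simp⟩
  positivity

end Empirical

section Channel

variable {𝓔 𝓩 : Type*} [Fintype 𝓔] [Nonempty 𝓔] {P : 𝓩 → 𝓔 → ℝ}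
  (hPpos : ∀ w e, 0 < P w e) {θ' : 𝓔 → ℝ} (hθ' : ∀ e, 0 < θ' e)
include hPpos hθ'

lemma sum_mul_pos (w : 𝓩) : 0 < ∑ e, P w e * θ' e :=
  sum_pos (fun e _ => mul_pos (hPpos w e) (hθ' e)) univ_nonempty

lemma West_pos (w : 𝓩) (e : 𝓔) : 0 < West P θ' w e :=
  div_pos (mul_pos (hPpos w e) (hθ' e)) (sum_mul_pos hPpos hθ' w)

lemma sum_West (w : 𝓩) : ∑ e, West P θ' w e = 1 := by
  unfold West
  rw [← sum_div, div_self (sum_mul_pos hPpos hθ' w).ne']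

lemma sum_West_mul_log_sub_le {θ : 𝓔 → ℝ} (hθ : ∀ e, 0 < θ e) (w : 𝓩) :
    ∑ e, West P θ' w e * (log (θ e) - log (θ' e)) ≤
      log (∑ e, P w e * θ e) - log (∑ e, P w e * θ' e) := by
  have hratio : ∑ e, West P θ' w e * (θ e / θ' e) =
      (∑ e, P w e * θ e) / ∑ e, P w e * θ' e := by
    rw [sum_div]
    refine sum_congr rfl fun e _ => ?_
    rw [West]
    field_simp [(hθ' e).ne']
  have jensen := strictConcaveOn_log_Ioi.concaveOn.le_map_sum
    (fun e _ => (West_pos hPpos hθ' w e).le) (sum_West hPpos hθ' w)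
    (fun e _ => div_pos (hθ e) (hθ' e))
  simp only [smul_eq_mul] at jensen
  rw [hratio, log_div (sum_mul_pos hPpos hθ w).ne' (sum_mul_pos hPpos hθ' w).ne'] at jensen
  simpa only [log_div (hθ _).ne' (hθ' _).ne'] using jensen

variable [Fintype 𝓩] {M : ℕ} (hM : M ≠ 0) (z : Fin M → 𝓩)
include hM

lemma babe_pos (e : 𝓔) : 0 < babe P z θ' e := by
  obtain ⟨i⟩ : Nonempty (Fin M) := ⟨⟨0, Nat.pos_of_ne_zero hM⟩⟩
  exact sum_pos' (fun w _ => mul_nonneg (emp_nonneg z w) (West_pos hPpos hθ' w e).le)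
    ⟨z i, mem_univ _, mul_pos (emp_comp_pos z hM i) (West_pos hPpos hθ' _ e)⟩

lemma sum_babe : ∑ e, babe P z θ' e = 1 := by
  simp only [babe, sum_comm (γ := 𝓔), ← mul_sum, sum_West hPpos hθ', mul_one, sum_emp z hM]

end Channel

lemma Qsur_eq_mul_sum_babe_mul_log {𝓔 𝓩 : Type*} [Fintype 𝓔] [Fintype 𝓩]
    (P : 𝓩 → 𝓔 → ℝ) {M : ℕ} (z : Fin M → 𝓩) (θ θ' : 𝓔 → ℝ) :
    Qsur P z θ θ' = M * ∑ e, babe P z θ' e * log (θ e) := by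
  rw [Qsur, sum_comm, mul_sum]
  refine sum_congr rfl fun e _ => ?_
  rw [sum_comp_eq_mul_sum_emp z (fun w => West P θ' w e * log (θ e)), babe, sum_mul]
  simp only [mul_assoc]

section EM

variable {𝓔 𝓩 : Type*} [Fintype 𝓔] [Nonempty 𝓔] {P : 𝓩 → 𝓔 → ℝ}
  (hPpos : ∀ w e, 0 < P w e) {M : ℕ} (z : Fin M → 𝓩) {θ' : 𝓔 → ℝ} (hθ' : ∀ e, 0 < θ' e)
include hPpos hθ'

lemma Qsur_sub_le_loglik_sub {θ : 𝓔 → ℝ} (hθ : ∀ e, 0 < θ e) :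
    Qsur P z θ θ' - Qsur P z θ' θ' ≤ loglik P z θ - loglik P z θ' := by
  simp only [Qsur, loglik, ← sum_sub_distrib, ← mul_sub]
  exact sum_le_sum fun i _ => sum_West_mul_log_sub_le hPpos hθ' hθ (z i)

lemma Qsur_le_Qsur_babe [Fintype 𝓩] (hM : M ≠ 0) {θ : 𝓔 → ℝ} (hθ : ∀ e, 0 < θ e)
    (hθsum : ∑ e, θ e = 1) : Qsur P z θ θ' ≤ Qsur P z (babe P z θ') θ' := by
  have gibbs := sum_mul_log_div_nonneg univ (fun e _ => (babe_pos hPpos hθ' hM z e).le)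
    (fun e _ => hθ e) (by rw [hθsum, sum_babe hPpos hθ' hM z])
  rw [← sub_nonneg, Qsur_eq_mul_sum_babe_mul_log, Qsur_eq_mul_sum_babe_mul_log, ← mul_sub,
    ← sum_sub_distrib]
  simp only [← mul_sub, ← log_div (babe_pos hPpos hθ' hM z _).ne' (hθ _).ne']
  positivity

lemma loglik_le_loglik_babe [Fintype 𝓩] (hM : M ≠ 0) (hθ'sum : ∑ e, θ' e = 1) :
    loglik P z θ' ≤ loglik P z (babe P z θ') := by
  have hQ := Qsur_sub_le_loglik_sub hPpos z hθ' (babe_pos hPpos hθ' hM z)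
  have hmax := Qsur_le_Qsur_babe hPpos z hθ' hM hθ' hθ'sum
  linarith

end EM

lemma loglik_nonpos {𝓔 𝓩 : Type*} [Fintype 𝓔] [Fintype 𝓩] {P : 𝓩 → 𝓔 → ℝ}
    (hP : ∀ w e, 0 ≤ P w e) (hPsum : ∀ e, ∑ w, P w e = 1) {M : ℕ} (z : Fin M → 𝓩)
    {θ : 𝓔 → ℝ} (hθ : ∀ e, 0 ≤ θ e) (hθsum : ∑ e, θ e = 1) : loglik P z θ ≤ 0 := by
  refine sum_nonpos fun i _ => log_nonpos (sum_nonneg fun e _ => mul_nonneg (hP _ e) (hθ e)) ?_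
  calc ∑ e, P (z i) e * θ e ≤ ∑ e, θ e := by
        refine sum_le_sum fun e _ => mul_le_of_le_one_left (hθ e) ?_
        exact hPsum e ▸ single_le_sum (fun w _ => hP w e) (mem_univ _)
    _ = 1 := hθsum

theorem stmt9_general {𝓔 𝓩 : Type*} [Fintype 𝓔] [Fintype 𝓩] [Nonempty 𝓔]
    (P : 𝓩 → 𝓔 → ℝ) (hPpos : ∀ w e, 0 < P w e) (hPsum : ∀ e, ∑ w : 𝓩, P w e = 1)
    {M : ℕ} (hM : 1 ≤ M) (z : Fin M → 𝓩)
    (θseq : ℕ → 𝓔 → ℝ)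
    (h0 : θseq 0 = fun _ => 1 / (Fintype.card 𝓔 : ℝ))
    (hstep : ∀ t : ℕ, θseq (t + 1) = babe P z (θseq t)) :
    (∀ t : ℕ, (∀ e : 𝓔, 0 < θseq t e) ∧ ∑ e : 𝓔, θseq t e = 1) ∧
    Monotone (fun t : ℕ => loglik P z (θseq t)) ∧
    (∀ t : ℕ, loglik P z (θseq t) ≤ 0) ∧
    ∃ l : ℝ, Tendsto (fun t : ℕ => loglik P z (θseq t)) atTop (nhds l) := by
  have hM0 : M ≠ 0 := Nat.one_le_iff_ne_zero.mp hM
  have hdist : ∀ t, (∀ e, 0 < θseq t e) ∧ ∑ e, θseq t e = 1 := by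
    intro t
    induction t with
    | zero =>
      rw [h0]
      refine ⟨fun _ => by positivity, ?_⟩
      rw [sum_const, card_univ, nsmul_eq_mul, mul_one_div_cancel (by positivity)]
    | succ t ih =>
      rw [hstep t]
      exact ⟨babe_pos hPpos ih.1 hM0 z, sum_babe hPpos ih.1 hM0 z⟩
  have hmono : Monotone fun t => loglik P z (θseq t) := monotone_nat_of_le_succ fun t => by
    rw [hstep t]
    exact loglik_le_loglik_babe hPpos z (hdist t).1 hM0 (hdist t).2
  have hbound : ∀ t, loglik P z (θseq t) ≤ 0 := fun t =>
    loglik_nonpos (fun w e => (hPpos w e).le) hPsum z (fun e => ((hdist t).1 e).le) (hdist t).2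
  refine ⟨hdist, hmono, hbound, _, tendsto_atTop_ciSup hmono ⟨0, ?_⟩⟩
  rintro _ ⟨t, rfl⟩
  exact hbound t

theorem stmt9 {𝓔 𝓩 : Type*} [Fintype 𝓔] [Fintype 𝓩] [Nonempty 𝓔] [Nonempty 𝓩]
    (P : 𝓩 → 𝓔 → ℝ) (hPpos : ∀ w e, 0 < P w e) (hPsum : ∀ e, ∑ w : 𝓩, P w e = 1)
    {M : ℕ} (hM : 1 ≤ M) (z : Fin M → 𝓩)
    (θseq : ℕ → 𝓔 → ℝ)
    (h0 : θseq 0 = fun _ => 1 / (Fintype.card 𝓔 : ℝ))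
    (hstep : ∀ t : ℕ, θseq (t + 1) = babe P z (θseq t)) :
    (∀ t : ℕ, (∀ e : 𝓔, 0 < θseq t e) ∧ ∑ e : 𝓔, θseq t e = 1) ∧
    Monotone (fun t : ℕ => loglik P z (θseq t)) ∧
    (∀ t : ℕ, loglik P z (θseq t) ≤ 0) ∧
    ∃ l : ℝ, Tendsto (fun t : ℕ => loglik P z (θseq t)) atTop (nhds l) :=
  stmt9_general P hPpos hPsum hM z θseq h0 hstep
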